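/- Let k ≥ 4. For l = 0,1,2,3 and every f ∈ C^∞(ℝ⁶, V_l), one has 𝒟_{l+1}(𝒟_l f) = 0; i.e. the sequence 0 → C^∞(ℝ⁶,V₀) →𝒟₀ C^∞(ℝ⁶,V₁) →𝒟₁ C^∞(ℝ⁶,V₂) →𝒟₂ C^∞(ℝ⁶,V₃) →𝒟₃ C^∞(ℝ⁶,V₄) → 0 is a differential complex. -/

import Mathlib

open scoped BigOperators ComplexConjugate ENNReal
open MeasureTheory

set_option maxHeartbeats 1000000

noncomputable section

/-- The index set `{1,2,3,4}` of spinor indices. -/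
abbrev Idx := Fin 4

/-- Tensors with `q` (antisymmetric) superscripts and `p` (symmetric) subscripts,
each index ranging over `{1,2,3,4}`. -/
abbrev Tens (q p : ℕ) := (Fin q → Idx) → (Fin p → Idx) → ℂ

/-- Symmetry in the subscripts. -/
def SymSub {q p : ℕ} (f : Tens q p) : Prop :=
  ∀ (A : Fin q → Idx) (σ : Equiv.Perm (Fin p)) (B : Fin p → Idx), f A (B ∘ σ) = f A B

/-- Antisymmetry in the superscripts. -/
def AntiSup {q p : ℕ} (f : Tens q p) : Prop :=
  ∀ (σ : Equiv.Perm (Fin q)) (A : Fin q → Idx) (B : Fin p → Idx),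
    f (A ∘ σ) B = ((Equiv.Perm.sign σ : ℤ) : ℂ) * f A B

/-- Membership in `V_l = ⊙^p ℂ⁴ ⊗ ∧^q ℂ⁴`: symmetric in subscripts, antisymmetric in
superscripts. -/
def IsMixed {q p : ℕ} (f : Tens q p) : Prop := AntiSup f ∧ SymSub f

/-- Symmetrization `ξ_{(B₁…B_t)}` of a `t`-index tensor. -/
def symmetrize {t : ℕ} (ξ : (Fin t → Idx) → ℂ) : (Fin t → Idx) → ℂ :=
  fun B => ((t.factorial : ℂ))⁻¹ * ∑ σ : Equiv.Perm (Fin t), ξ (B ∘ σ)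

/-- Antisymmetrization `ξ_{[B₁…B_t]}` of a `t`-index tensor. -/
def antisymmetrize {t : ℕ} (ξ : (Fin t → Idx) → ℂ) : (Fin t → Idx) → ℂ :=
  fun B => ((t.factorial : ℂ))⁻¹ * ∑ σ : Equiv.Perm (Fin t),
    ((Equiv.Perm.sign σ : ℤ) : ℂ) * ξ (B ∘ σ)

/-- The contraction `𝒞(f)^{A₁…A_{q}}_{B₁…B_{p}} = Σ_C f^{C A₁…A_q}_{B₁…B_p C}`. -/
def contr {q p : ℕ} (f : Tens (q+1) (p+1)) : Tens q p :=
  fun A B => ∑ C : Idx, f (Fin.cons C A) (Fin.snoc B C)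

/-- The Hermitian inner product on tensors, induced from `⊗^k ℂ⁴`. -/
def tinner {q p : ℕ} (f h : Tens q p) : ℂ :=
  ∑ A : Fin q → Idx, ∑ B : Fin p → Idx, f A B * conj (h A B)

/-- The squared norm of a tensor. -/
def tnormSq {q p : ℕ} (f : Tens q p) : ℝ :=
  ∑ A : Fin q → Idx, ∑ B : Fin p → Idx, Complex.normSq (f A B)
/-- Points of `ℝ⁶`, with coordinates `x 0, …, x 5`. -/
abbrev Pt := Fin 6 → ℝ

/-- Coefficients (in front of `∂_{x_j}`) of the operators `∇^{AB}`:
`∇^{12}=i∂₀+∂₅`, `∇^{13}=∂₃+i∂₄`, `∇^{14}=∂₁+i∂₂`, `∇^{23}=∂₁−i∂₂`,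
`∇^{24}=−∂₃+i∂₄`, `∇^{34}=−i∂₀+∂₅`, antisymmetric. -/
def nablaCoeff : Fin 4 → Fin 4 → Fin 6 → ℂ :=
  ![![(0 : Fin 6 → ℂ), ![Complex.I,0,0,0,0,1], ![0,0,0,1,Complex.I,0], ![0,1,Complex.I,0,0,0]],
    ![-![Complex.I,0,0,0,0,1], (0 : Fin 6 → ℂ), ![0,1,-Complex.I,0,0,0], ![0,0,0,-1,Complex.I,0]],
    ![-![0,0,0,1,Complex.I,0], -![0,1,-Complex.I,0,0,0], (0 : Fin 6 → ℂ), ![-Complex.I,0,0,0,0,1]],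
    ![-![0,1,Complex.I,0,0,0], -![0,0,0,-1,Complex.I,0], -![-Complex.I,0,0,0,0,1], (0 : Fin 6 → ℂ)]]

/-- The partial derivative `∂_{x_j} u (x)` of a complex valued function on `ℝ⁶`. -/
def pd (j : Fin 6) (u : Pt → ℂ) (x : Pt) : ℂ := fderiv ℝ u x (Pi.single j 1)

/-- The first order constant coefficient differential operator `∇^{AB}`. -/
def nabla (A B : Fin 4) (u : Pt → ℂ) (x : Pt) : ℂ :=
  ∑ j : Fin 6, nablaCoeff A B j * pd j u x

/-- `ε_{ABCD}`: the sign of the permutation `(1,2,3,4) ↦ (A,B,C,D)`, `0` if indices repeat. -/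
def eps (A B C D : Fin 4) : ℤ :=
  if h : Function.Bijective ![A,B,C,D] then (Equiv.Perm.sign (Equiv.ofBijective _ h) : ℤ) else 0

/-- The lowered operator `∇_{AB} := (1/2) Σ_{C,D} ε_{ABCD} ∇^{CD}`. -/
def nablaLow (A B : Fin 4) (u : Pt → ℂ) (x : Pt) : ℂ :=
  (2 : ℂ)⁻¹ * ∑ C : Fin 4, ∑ D : Fin 4, ((eps A B C D : ℤ) : ℂ) * nabla C D u x

/-- The weight `φ(x) = |x|²`. -/
def phi (x : Pt) : ℝ := ∑ j : Fin 6, (x j)^2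

/-- `Θ_{AB} u := −e^{φ} ∇_{AB}(e^{−φ} u)`, the formal adjoint of `∇^{AB}` in `L²_φ`. -/
def Theta (A B : Fin 4) (u : Pt → ℂ) (x : Pt) : ℂ :=
  - (Real.exp (phi x) : ℂ) * nablaLow A B (fun y => (Real.exp (-(phi y)) : ℂ) * u y) x

/-- The operator `𝒟_l`:
`(𝒟_l f)^{A₁…A_{l+1}}_{B₂…B_{k−l}} = Σ_{B₁} ∇^{B₁[A₁} f^{A₂…A_{l+1}]}_{B₁B₂…B_{k−l}}`,
where `[⋯]` antisymmetrizes the superscripts. -/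
def Dop {q p : ℕ} (u : Pt → Tens q (p+1)) (x : Pt) : Tens (q+1) p :=
  fun A B => antisymmetrize
    (fun A' => ∑ B₁ : Idx, nabla B₁ (A' 0) (fun y => u y (Fin.tail A') (Fin.cons B₁ B)) x) A

/-- The formal adjoint `𝒟_l^⋆`:
`(𝒟_l^⋆ f)^{A₁…A_l}_{B₁…B_{k−l}} = −Σ_E Θ_{E(B₁} f^{EA₁…A_l}_{B₂…B_{k−l})}`,
where `(⋯)` symmetrizes the subscripts. -/
def DopStar {q p : ℕ} (u : Pt → Tens (q+1) p) (x : Pt) : Tens q (p+1) :=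
  fun A B => - symmetrize
    (fun B' => ∑ E : Idx, Theta E (B' 0) (fun y => u y (Fin.cons E A) (Fin.tail B')) x) B

/-- A tensor-valued function is smooth iff all its components are. -/
def TensSmooth {q p : ℕ} (u : Pt → Tens q p) : Prop :=
  ∀ A B, ContDiff ℝ (⊤ : ℕ∞) fun x => u x A B

/-- A tensor-valued function is compactly supported iff all its components are. -/
def TensCpt {q p : ℕ} (u : Pt → Tens q p) : Prop :=
  ∀ A B, HasCompactSupport fun x => u x A B
/-! ### Auxiliary lemmas for the proof -/

section AuxProof

open Equiv Equiv.Perm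

/-- Partial derivatives of smooth functions are smooth. -/
lemma pd_smooth {u : Pt → ℂ} (hu : ContDiff ℝ (⊤ : ℕ∞) u) (j : Fin 6) :
    ContDiff ℝ (⊤ : ℕ∞) (pd j u) := by
  have h1 : ContDiff ℝ (⊤ : ℕ∞) (fderiv ℝ u) := hu.fderiv_right (by simp)
  exact h1.clm_apply contDiff_const

lemma pd_const_mul {u : Pt → ℂ} {x : Pt} (hu : DifferentiableAt ℝ u x) (c : ℂ) (j : Fin 6) :
    pd j (fun y => c * u y) x = c * pd j u x := by
  unfold pd
  rw [fderiv_const_mul hu c]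
  simp

lemma pd_sum {ι : Type*} (s : Finset ι) (u : ι → Pt → ℂ) {x : Pt}
    (h : ∀ i ∈ s, DifferentiableAt ℝ (u i) x) (j : Fin 6) :
    pd j (fun y => ∑ i ∈ s, u i y) x = ∑ i ∈ s, pd j (u i) x := by
  unfold pd
  rw [fderiv_fun_sum h]
  simp

lemma pd_fderiv2 {u : Pt → ℂ} (hu : ContDiff ℝ (⊤ : ℕ∞) u) (j j' : Fin 6) (x : Pt) :
    pd j (pd j' u) x = fderiv ℝ (fderiv ℝ u) x (Pi.single j 1) (Pi.single j' 1) := by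
  have hdf : DifferentiableAt ℝ (fderiv ℝ u) x :=
    ((hu.fderiv_right (m := (⊤ : ℕ∞)) (by simp)).differentiable (by simp)).differentiableAt
  have hcomp : HasFDerivAt
      (fun y => (ContinuousLinearMap.apply ℝ ℂ ((Pi.single j' 1 : Pt))) (fderiv ℝ u y))
      ((ContinuousLinearMap.apply ℝ ℂ ((Pi.single j' 1 : Pt))).comp
        (fderiv ℝ (fderiv ℝ u) x)) x :=
    (ContinuousLinearMap.apply ℝ ℂ ((Pi.single j' 1 : Pt))).hasFDerivAt.comp x
      hdf.hasFDerivAt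
  have h2 : pd j' u = fun y =>
      (ContinuousLinearMap.apply ℝ ℂ ((Pi.single j' 1 : Pt))) (fderiv ℝ u y) := rfl
  show fderiv ℝ (pd j' u) x (Pi.single j 1) = _
  rw [h2, hcomp.fderiv]
  rfl

/-- Schwarz: second partial derivatives of a smooth function commute. -/
lemma pd_pd_comm {u : Pt → ℂ} (hu : ContDiff ℝ (⊤ : ℕ∞) u) (j j' : Fin 6) (x : Pt) :
    pd j (pd j' u) x = pd j' (pd j u) x := by
  have hdf : DifferentiableAt ℝ (fderiv ℝ u) x :=
    ((hu.fderiv_right (m := (⊤ : ℕ∞)) (by simp)).differentiable (by simp)).differentiableAt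
  rw [pd_fderiv2 hu, pd_fderiv2 hu]
  exact second_derivative_symmetric
    (fun y => (hu.differentiable (by simp) y).hasFDerivAt) hdf.hasFDerivAt _ _

lemma nabla_smooth {u : Pt → ℂ} (hu : ContDiff ℝ (⊤ : ℕ∞) u) (C D : Fin 4) :
    ContDiff ℝ (⊤ : ℕ∞) (nabla C D u) := by
  have h : nabla C D u = fun x => ∑ j : Fin 6, nablaCoeff C D j * pd j u x := rfl
  rw [h]
  exact ContDiff.sum fun j _ => contDiff_const.mul (pd_smooth hu j)

lemma nabla_const_mul {u : Pt → ℂ} (hu : Differentiable ℝ u) (C D : Fin 4) (c : ℂ) (x : Pt) :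
    nabla C D (fun y => c * u y) x = c * nabla C D u x := by
  unfold nabla
  rw [Finset.mul_sum]
  refine Finset.sum_congr rfl fun j _ => ?_
  rw [pd_const_mul (hu x) c j]
  ring

lemma nabla_sum {ι : Type*} [Fintype ι] {u : ι → Pt → ℂ} (hu : ∀ i, Differentiable ℝ (u i))
    (C D : Fin 4) (x : Pt) :
    nabla C D (fun y => ∑ i, u i y) x = ∑ i, nabla C D (u i) x := by
  unfold nabla
  have h : ∀ j : Fin 6, pd j (fun y => ∑ i, u i y) x = ∑ i, pd j (u i) x :=
    fun j => pd_sum Finset.univ u (fun i _ => (hu i x)) j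
  simp_rw [h, Finset.mul_sum]
  exact Finset.sum_comm

lemma nabla_pd_expand {u : Pt → ℂ} (hu : ContDiff ℝ (⊤ : ℕ∞) u) (C D E F : Fin 4) (x : Pt) :
    nabla C D (nabla E F u) x
      = ∑ j : Fin 6, ∑ j' : Fin 6,
          nablaCoeff C D j * (nablaCoeff E F j' * pd j (pd j' u) x) := by
  have h1 : ∀ j' : Fin 6, Differentiable ℝ (fun y => nablaCoeff E F j' * pd j' u y) :=
    fun j' => (contDiff_const.mul (pd_smooth hu j')).differentiable (by simp)
  show ∑ j : Fin 6, nablaCoeff C D j * pd j (nabla E F u) x = _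
  refine Finset.sum_congr rfl fun j _ => ?_
  have h2 : nabla E F u = fun y => ∑ j' : Fin 6, nablaCoeff E F j' * pd j' u y := rfl
  rw [h2, pd_sum Finset.univ _ (fun j' _ => (h1 j' x)) j, Finset.mul_sum]
  refine Finset.sum_congr rfl fun j' _ => ?_
  rw [pd_const_mul (((pd_smooth hu j').differentiable (by simp)) x)]

/-- The first order operators `∇` commute on smooth functions. -/
lemma nabla_nabla_comm {u : Pt → ℂ} (hu : ContDiff ℝ (⊤ : ℕ∞) u) (C D E F : Fin 4) (x : Pt) :
    nabla C D (nabla E F u) x = nabla E F (nabla C D u) x := by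
  rw [nabla_pd_expand hu, nabla_pd_expand hu, Finset.sum_comm]
  refine Finset.sum_congr rfl fun j' _ => Finset.sum_congr rfl fun j _ => ?_
  rw [pd_pd_comm hu j j' x]
  ring

lemma nabla_mixsum {ι : Type*} [Fintype ι] (C D : Fin 4) (c : ℂ) (s : ι → ℂ)
    (v : ι → Idx → Pt → ℂ) (hv : ∀ i b, ContDiff ℝ (⊤ : ℕ∞) (v i b)) (x : Pt) :
    nabla C D (fun y => c * ∑ i, s i * ∑ b : Idx, v i b y) x
      = c * ∑ i, s i * ∑ b : Idx, nabla C D (v i b) x := by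
  have h1 : ∀ i b, Differentiable ℝ (v i b) := fun i b => (hv i b).differentiable (by simp)
  have h2 : ∀ i : ι, Differentiable ℝ (fun y => ∑ b : Idx, v i b y) :=
    fun i => Differentiable.fun_sum fun b _ => h1 i b
  have h3 : ∀ i : ι, Differentiable ℝ (fun y => s i * ∑ b : Idx, v i b y) :=
    fun i => (h2 i).const_mul (s i)
  have h4 : Differentiable ℝ (fun y => ∑ i, s i * ∑ b : Idx, v i b y) :=
    Differentiable.fun_sum fun i _ => h3 i
  rw [nabla_const_mul h4 C D c x, nabla_sum h3 C D x]
  refine congrArg _ (Finset.sum_congr rfl fun i _ => ?_)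
  rw [nabla_const_mul (h2 i) C D (s i) x, nabla_sum (h1 i) C D x]

/-- The extension of a permutation of `Fin (n+1)` to a permutation of `Fin (n+2)`
fixing `0` and acting on the tail. -/
def tauHat {n : ℕ} (τ : Equiv.Perm (Fin (n+1))) : Equiv.Perm (Fin (n+2)) :=
  Equiv.Perm.decomposeFin.symm (0, τ)

lemma tauHat_zero {n : ℕ} (τ : Equiv.Perm (Fin (n+1))) : tauHat τ 0 = 0 :=
  Equiv.Perm.decomposeFin_symm_apply_zero 0 τ

lemma tauHat_succ {n : ℕ} (τ : Equiv.Perm (Fin (n+1))) (i : Fin (n+1)) :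
    tauHat τ i.succ = (τ i).succ := by
  simp [tauHat, Equiv.Perm.decomposeFin_symm_apply_succ]

lemma tauHat_sign {n : ℕ} (τ : Equiv.Perm (Fin (n+1))) :
    Equiv.Perm.sign (tauHat τ) = Equiv.Perm.sign τ := by
  simp [tauHat, Equiv.Perm.decomposeFin.symm_sign]

lemma fin_succ_succ_ne_one {n : ℕ} (i : Fin n) : (i.succ.succ : Fin (n+2)) ≠ 1 := by
  intro h
  rw [← Fin.succ_zero_eq_one] at h
  exact Fin.succ_ne_zero i (Fin.succ_injective _ h)

lemma cons_cons_swap {p : ℕ} (a b : Idx) (B : Fin p → Idx) :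
    (Fin.cons b (Fin.cons a B) : Fin (p+2) → Idx) ∘ ⇑(Equiv.swap (0 : Fin (p+2)) 1)
      = Fin.cons a (Fin.cons b B) := by
  funext j
  refine Fin.cases ?_ (fun i => ?_) j
  · simp only [Function.comp_apply, Equiv.swap_apply_left, Fin.cons_zero]
    rw [← Fin.succ_zero_eq_one, Fin.cons_succ, Fin.cons_zero]
  · refine Fin.cases ?_ (fun i' => ?_) i
    · simp [Fin.succ_zero_eq_one, Equiv.swap_apply_right]
    · have h1 : (i'.succ.succ : Fin (p+2)) ≠ 0 := Fin.succ_ne_zero _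
      have h2 : (i'.succ.succ : Fin (p+2)) ≠ 1 := fin_succ_succ_ne_one i'
      simp [Function.comp, Equiv.swap_apply_of_ne_of_ne h1 h2]

/-- Symmetry of the pointwise double-`∇` kernel under swapping the two
distinguished superscripts. -/
lemma K_swap {q p : ℕ} (f : Pt → Tens q (p+2)) (hf : TensSmooth f)
    (hsym : ∀ x, SymSub (f x)) (x : Pt) (B : Fin p → Idx) (g : Fin (q+2) → Idx) :
    (∑ B₂ : Idx, ∑ B₁ : Idx,
        nabla B₂ ((g ∘ ⇑(Equiv.swap (0 : Fin (q+2)) 1)) 0)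
          (nabla B₁ ((g ∘ ⇑(Equiv.swap (0 : Fin (q+2)) 1)) 1)
            (fun z => f z (fun i => (g ∘ ⇑(Equiv.swap (0 : Fin (q+2)) 1)) i.succ.succ)
              (Fin.cons B₁ (Fin.cons B₂ B)))) x)
      = ∑ B₂ : Idx, ∑ B₁ : Idx,
          nabla B₂ (g 0)
            (nabla B₁ (g 1)
              (fun z => f z (fun i => g i.succ.succ) (Fin.cons B₁ (Fin.cons B₂ B)))) x := by
  have e0 : (g ∘ ⇑(Equiv.swap (0 : Fin (q+2)) 1)) 0 = g 1 := by
    simp [Equiv.swap_apply_left]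
  have e1 : (g ∘ ⇑(Equiv.swap (0 : Fin (q+2)) 1)) 1 = g 0 := by
    simp [Equiv.swap_apply_right]
  have e2 : (fun i : Fin q => (g ∘ ⇑(Equiv.swap (0 : Fin (q+2)) 1)) i.succ.succ)
      = fun i => g i.succ.succ := by
    funext i
    have h1 : (i.succ.succ : Fin (q+2)) ≠ 0 := Fin.succ_ne_zero _
    have h2 : (i.succ.succ : Fin (q+2)) ≠ 1 := fin_succ_succ_ne_one i
    simp [Function.comp, Equiv.swap_apply_of_ne_of_ne h1 h2]
  rw [e0, e1, e2, Finset.sum_comm]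
  refine Finset.sum_congr rfl fun a _ => Finset.sum_congr rfl fun b _ => ?_
  -- now: nabla b (g 1) (nabla a (g 0) (f · rest (cons a (cons b B)))) x
  --    = nabla a (g 0) (nabla b (g 1) (f · rest (cons b (cons a B)))) x
  have hff : (fun z => f z (fun i => g i.succ.succ) (Fin.cons a (Fin.cons b B)))
      = fun z => f z (fun i => g i.succ.succ) (Fin.cons b (Fin.cons a B)) := by
    funext z
    rw [← cons_cons_swap a b B]
    exact hsym z _ (Equiv.swap 0 1) _
  rw [hff]
  exact (nabla_nabla_comm (hf _ _) a (g 0) b (g 1) x).symm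

/-- Alternating sums over all permutations of a function symmetric in the first two
slots vanish. -/
lemma alt_sum_zero {n : ℕ} (F : (Fin (n+2) → Idx) → ℂ)
    (hF : ∀ g, F (g ∘ ⇑(Equiv.swap (0 : Fin (n+2)) 1)) = F g) (A : Fin (n+2) → Idx) :
    ∑ π : Equiv.Perm (Fin (n+2)), ((Equiv.Perm.sign π : ℤ) : ℂ) * F (A ∘ ⇑π) = 0 := by
  have h01 : (0 : Fin (n+2)) ≠ 1 := by
    intro h
    exact absurd (congrArg Fin.val h) (by simp)
  set s : Equiv.Perm (Fin (n+2)) := Equiv.swap 0 1 with hs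
  have key : ∀ π : Equiv.Perm (Fin (n+2)),
      ((Equiv.Perm.sign (π * s) : ℤ) : ℂ) * F (A ∘ ⇑(π * s))
        = -(((Equiv.Perm.sign π : ℤ) : ℂ) * F (A ∘ ⇑π)) := by
    intro π
    have hsgn : Equiv.Perm.sign (π * s) = -Equiv.Perm.sign π := by
      rw [Equiv.Perm.sign_mul, hs, Equiv.Perm.sign_swap h01, mul_neg_one]
    have hcomp : (A ∘ ⇑(π * s)) = (A ∘ ⇑π) ∘ ⇑s := rfl
    rw [hsgn, hcomp, hs, hF]
    push_cast
    ring
  have hbij := Equiv.sum_comp (Equiv.mulRight s)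
    (fun π : Equiv.Perm (Fin (n+2)) => ((Equiv.Perm.sign π : ℤ) : ℂ) * F (A ∘ ⇑π))
  simp only [Equiv.coe_mulRight] at hbij
  have : ∑ π : Equiv.Perm (Fin (n+2)), ((Equiv.Perm.sign π : ℤ) : ℂ) * F (A ∘ ⇑π)
      = -∑ π : Equiv.Perm (Fin (n+2)), ((Equiv.Perm.sign π : ℤ) : ℂ) * F (A ∘ ⇑π) := by
    conv_lhs => rw [← hbij]
    rw [← Finset.sum_neg_distrib]
    exact Finset.sum_congr rfl fun π _ => key π
  exact CharZero.eq_neg_self_iff.mp this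

/-- The key computation: `𝒟 ∘ 𝒟 = 0` on smooth subscript-symmetric tensor fields. -/
lemma Dop_Dop_eq_zero {q p : ℕ} (f : Pt → Tens q (p+2)) (hf : TensSmooth f)
    (hsym : ∀ x, SymSub (f x)) (x : Pt) (A : Fin (q+2) → Idx) (B : Fin p → Idx) :
    Dop (fun y => Dop f y) x A B = 0 := by
  classical
  -- the pointwise kernel
  set K : (Fin (q+2) → Idx) → ℂ := fun g =>
    ∑ B₂ : Idx, ∑ B₁ : Idx,
      nabla B₂ (g 0)
        (nabla B₁ (g 1)
          (fun z => f z (fun i => g i.succ.succ) (Fin.cons B₁ (Fin.cons B₂ B)))) x with hK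
  -- Step 1: unfold the outer Dop
  have step0 : Dop (fun y => Dop f y) x A B
      = (((q+2).factorial : ℂ))⁻¹ * ∑ σ : Equiv.Perm (Fin (q+2)),
          ((Equiv.Perm.sign σ : ℤ) : ℂ) * ∑ B₂ : Idx,
            nabla B₂ ((A ∘ ⇑σ) 0)
              (fun y => Dop f y (Fin.tail (A ∘ ⇑σ)) (Fin.cons B₂ B)) x := rfl
  -- Step 2: expand the inner Dop inside the outer nabla
  have step1 : ∀ (σ : Equiv.Perm (Fin (q+2))) (B₂ : Idx),
      nabla B₂ ((A ∘ ⇑σ) 0)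
          (fun y => Dop f y (Fin.tail (A ∘ ⇑σ)) (Fin.cons B₂ B)) x
        = (((q+1).factorial : ℂ))⁻¹ * ∑ τ : Equiv.Perm (Fin (q+1)),
            ((Equiv.Perm.sign τ : ℤ) : ℂ) * ∑ B₁ : Idx,
              nabla B₂ ((A ∘ ⇑σ) 0)
                (nabla B₁ ((Fin.tail (A ∘ ⇑σ) ∘ ⇑τ) 0)
                  (fun z => f z (Fin.tail (Fin.tail (A ∘ ⇑σ) ∘ ⇑τ))
                    (Fin.cons B₁ (Fin.cons B₂ B)))) x := by
    intro σ B₂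
    have hexp : (fun y => Dop f y (Fin.tail (A ∘ ⇑σ)) (Fin.cons B₂ B))
        = fun y => (((q+1).factorial : ℂ))⁻¹ * ∑ τ : Equiv.Perm (Fin (q+1)),
            ((Equiv.Perm.sign τ : ℤ) : ℂ) * ∑ B₁ : Idx,
              nabla B₁ ((Fin.tail (A ∘ ⇑σ) ∘ ⇑τ) 0)
                (fun z => f z (Fin.tail (Fin.tail (A ∘ ⇑σ) ∘ ⇑τ))
                  (Fin.cons B₁ (Fin.cons B₂ B))) y := rfl
    rw [hexp]
    exact nabla_mixsum B₂ ((A ∘ ⇑σ) 0) (((q+1).factorial : ℂ))⁻¹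
      (fun τ : Equiv.Perm (Fin (q+1)) => ((Equiv.Perm.sign τ : ℤ) : ℂ))
      (fun τ B₁ => fun y =>
        nabla B₁ ((Fin.tail (A ∘ ⇑σ) ∘ ⇑τ) 0)
          (fun z => f z (Fin.tail (Fin.tail (A ∘ ⇑σ) ∘ ⇑τ))
            (Fin.cons B₁ (Fin.cons B₂ B))) y)
      (fun τ B₁ => nabla_smooth (hf _ _) B₁ _) x
  -- Step 3: identify the summand with the kernel K at reshuffled indices
  have step2 : ∀ (σ : Equiv.Perm (Fin (q+2))) (τ : Equiv.Perm (Fin (q+1))),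
      (∑ B₂ : Idx, ∑ B₁ : Idx,
        nabla B₂ ((A ∘ ⇑σ) 0)
          (nabla B₁ ((Fin.tail (A ∘ ⇑σ) ∘ ⇑τ) 0)
            (fun z => f z (Fin.tail (Fin.tail (A ∘ ⇑σ) ∘ ⇑τ))
              (Fin.cons B₁ (Fin.cons B₂ B)))) x)
        = K (A ∘ ⇑(σ * tauHat τ)) := by
    intro σ τ
    have e0 : (A ∘ ⇑(σ * tauHat τ)) 0 = (A ∘ ⇑σ) 0 := by
      simp [Equiv.Perm.mul_apply, tauHat_zero]
    have e1 : (A ∘ ⇑(σ * tauHat τ)) 1 = (Fin.tail (A ∘ ⇑σ) ∘ ⇑τ) 0 := by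
      show A ((σ * tauHat τ) 1) = (A ∘ ⇑σ) (τ 0).succ
      rw [Equiv.Perm.mul_apply, ← Fin.succ_zero_eq_one, tauHat_succ]
      rfl
    have e2 : (fun i : Fin q => (A ∘ ⇑(σ * tauHat τ)) i.succ.succ)
        = Fin.tail (Fin.tail (A ∘ ⇑σ) ∘ ⇑τ) := by
      funext i
      show A ((σ * tauHat τ) i.succ.succ) = (A ∘ ⇑σ) (τ i.succ).succ
      rw [Equiv.Perm.mul_apply, tauHat_succ]
      rfl
    rw [hK]
    simp only [e0, e1, e2]
  -- Step 4: per fixed τ, the alternating sum over σ vanishes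
  have hKswap : ∀ g : Fin (q+2) → Idx, K (g ∘ ⇑(Equiv.swap (0 : Fin (q+2)) 1)) = K g :=
    fun g => K_swap f hf hsym x B g
  have hzero : ∑ π : Equiv.Perm (Fin (q+2)), ((Equiv.Perm.sign π : ℤ) : ℂ) * K (A ∘ ⇑π) = 0 :=
    alt_sum_zero K hKswap A
  -- Step 5: assemble
  have hT : ∀ σ : Equiv.Perm (Fin (q+2)),
      (∑ B₂ : Idx, nabla B₂ ((A ∘ ⇑σ) 0)
          (fun y => Dop f y (Fin.tail (A ∘ ⇑σ)) (Fin.cons B₂ B)) x)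
        = (((q+1).factorial : ℂ))⁻¹ * ∑ τ : Equiv.Perm (Fin (q+1)),
            ((Equiv.Perm.sign τ : ℤ) : ℂ) * K (A ∘ ⇑(σ * tauHat τ)) := by
    intro σ
    calc (∑ B₂ : Idx, nabla B₂ ((A ∘ ⇑σ) 0)
          (fun y => Dop f y (Fin.tail (A ∘ ⇑σ)) (Fin.cons B₂ B)) x)
        = ∑ B₂ : Idx, (((q+1).factorial : ℂ))⁻¹ * ∑ τ : Equiv.Perm (Fin (q+1)),
            ((Equiv.Perm.sign τ : ℤ) : ℂ) * ∑ B₁ : Idx,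
              nabla B₂ ((A ∘ ⇑σ) 0)
                (nabla B₁ ((Fin.tail (A ∘ ⇑σ) ∘ ⇑τ) 0)
                  (fun z => f z (Fin.tail (Fin.tail (A ∘ ⇑σ) ∘ ⇑τ))
                    (Fin.cons B₁ (Fin.cons B₂ B)))) x :=
          Finset.sum_congr rfl fun B₂ _ => step1 σ B₂
      _ = (((q+1).factorial : ℂ))⁻¹ * ∑ B₂ : Idx, ∑ τ : Equiv.Perm (Fin (q+1)),
            ((Equiv.Perm.sign τ : ℤ) : ℂ) * ∑ B₁ : Idx,
              nabla B₂ ((A ∘ ⇑σ) 0)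
                (nabla B₁ ((Fin.tail (A ∘ ⇑σ) ∘ ⇑τ) 0)
                  (fun z => f z (Fin.tail (Fin.tail (A ∘ ⇑σ) ∘ ⇑τ))
                    (Fin.cons B₁ (Fin.cons B₂ B)))) x := (Finset.mul_sum _ _ _).symm
      _ = (((q+1).factorial : ℂ))⁻¹ * ∑ τ : Equiv.Perm (Fin (q+1)), ∑ B₂ : Idx,
            ((Equiv.Perm.sign τ : ℤ) : ℂ) * ∑ B₁ : Idx,
              nabla B₂ ((A ∘ ⇑σ) 0)
                (nabla B₁ ((Fin.tail (A ∘ ⇑σ) ∘ ⇑τ) 0)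
                  (fun z => f z (Fin.tail (Fin.tail (A ∘ ⇑σ) ∘ ⇑τ))
                    (Fin.cons B₁ (Fin.cons B₂ B)))) x := by rw [Finset.sum_comm]
      _ = (((q+1).factorial : ℂ))⁻¹ * ∑ τ : Equiv.Perm (Fin (q+1)),
            ((Equiv.Perm.sign τ : ℤ) : ℂ) * K (A ∘ ⇑(σ * tauHat τ)) := by
          refine congrArg _ (Finset.sum_congr rfl fun τ _ => ?_)
          rw [← Finset.mul_sum, ← step2 σ τ]
  have hsgn : ∀ (σ : Equiv.Perm (Fin (q+2))) (τ : Equiv.Perm (Fin (q+1))),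
      ((Equiv.Perm.sign σ : ℤ) : ℂ) * (((Equiv.Perm.sign τ : ℤ) : ℂ) *
          K (A ∘ ⇑(σ * tauHat τ)))
        = ((Equiv.Perm.sign (σ * tauHat τ) : ℤ) : ℂ) * K (A ∘ ⇑(σ * tauHat τ)) := by
    intro σ τ
    rw [Equiv.Perm.sign_mul, tauHat_sign]
    push_cast
    ring
  rw [step0]
  calc (((q+2).factorial : ℂ))⁻¹ * ∑ σ : Equiv.Perm (Fin (q+2)),
        ((Equiv.Perm.sign σ : ℤ) : ℂ) * ∑ B₂ : Idx,
          nabla B₂ ((A ∘ ⇑σ) 0)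
            (fun y => Dop f y (Fin.tail (A ∘ ⇑σ)) (Fin.cons B₂ B)) x
      = (((q+2).factorial : ℂ))⁻¹ * ∑ σ : Equiv.Perm (Fin (q+2)),
          (((q+1).factorial : ℂ))⁻¹ * ∑ τ : Equiv.Perm (Fin (q+1)),
            ((Equiv.Perm.sign (σ * tauHat τ) : ℤ) : ℂ) * K (A ∘ ⇑(σ * tauHat τ)) := by
        refine congrArg _ (Finset.sum_congr rfl fun σ _ => ?_)
        rw [hT σ, Finset.mul_sum, Finset.mul_sum, Finset.mul_sum]
        refine Finset.sum_congr rfl fun τ _ => ?_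
        rw [← hsgn σ τ]
        ring
    _ = (((q+2).factorial : ℂ))⁻¹ * ((((q+1).factorial : ℂ))⁻¹ *
          ∑ σ : Equiv.Perm (Fin (q+2)), ∑ τ : Equiv.Perm (Fin (q+1)),
            ((Equiv.Perm.sign (σ * tauHat τ) : ℤ) : ℂ) * K (A ∘ ⇑(σ * tauHat τ))) :=
        congrArg _ (Finset.mul_sum _ _ _).symm
    _ = (((q+2).factorial : ℂ))⁻¹ * ((((q+1).factorial : ℂ))⁻¹ *
          ∑ τ : Equiv.Perm (Fin (q+1)), ∑ σ : Equiv.Perm (Fin (q+2)),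
            ((Equiv.Perm.sign (σ * tauHat τ) : ℤ) : ℂ) * K (A ∘ ⇑(σ * tauHat τ))) := by
        rw [Finset.sum_comm]
    _ = 0 := by
        have hτ : ∀ τ : Equiv.Perm (Fin (q+1)),
            (∑ σ : Equiv.Perm (Fin (q+2)),
              ((Equiv.Perm.sign (σ * tauHat τ) : ℤ) : ℂ) * K (A ∘ ⇑(σ * tauHat τ))) = 0 := by
          intro τ
          have := Equiv.sum_comp (Equiv.mulRight (tauHat τ))
            (fun π : Equiv.Perm (Fin (q+2)) =>
              ((Equiv.Perm.sign π : ℤ) : ℂ) * K (A ∘ ⇑π))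
          simp only [Equiv.coe_mulRight] at this
          rw [this, hzero]
        simp_rw [hτ]
        simp

end AuxProof

/-- For `k = m + 4 ≥ 4`, the sequence
`0 → C^∞(ℝ⁶,V₀) →𝒟₀ C^∞(ℝ⁶,V₁) →𝒟₁ C^∞(ℝ⁶,V₂) →𝒟₂ C^∞(ℝ⁶,V₃) →𝒟₃ C^∞(ℝ⁶,V₄) → 0`
is a differential complex: `𝒟_{l+1} ∘ 𝒟_l = 0` (the component into the zero space being
trivial). -/
theorem Dop_complex (k m : ℕ) (hk : k = m + 4) :
    (∀ f : Pt → Tens 0 (m+4), TensSmooth f → (∀ x, IsMixed (f x)) →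
      ∀ x A B, Dop (fun y => Dop f y) x A B = 0) ∧
    (∀ f : Pt → Tens 1 (m+3), TensSmooth f → (∀ x, IsMixed (f x)) →
      ∀ x A B, Dop (fun y => Dop f y) x A B = 0) ∧
    (∀ f : Pt → Tens 2 (m+2), TensSmooth f → (∀ x, IsMixed (f x)) →
      ∀ x A B, Dop (fun y => Dop f y) x A B = 0) := by
  -- (for `l = 3` the next operator `𝒟₄` is the zero map into the zero space,
  -- so `𝒟₄ ∘ 𝒟₃ = 0` holds trivially)
  refine ⟨fun f hf hmix x A B => ?_, fun f hf hmix x A B => ?_, fun f hf hmix x A B => ?_⟩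
  · exact Dop_Dop_eq_zero (q := 0) (p := m+2) f hf (fun x => (hmix x).2) x A B
  · exact Dop_Dop_eq_zero (q := 1) (p := m+1) f hf (fun x => (hmix x).2) x A B
  · exact Dop_Dop_eq_zero (q := 2) (p := m) f hf (fun x => (hmix x).2) x A B
end
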